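/- arXiv:0806.2038 — 4 statements merged into one kernel-verified Lean document; each statement's English description precedes it below -/
import Mathlib

section
/- Let k be a field of characteristic zero, let n ≥ 1, and let A be an integral domain containing k that is a unique factorization domain, whose fraction field has transcendence degree n+1 over k, and with A* = k*. Let D_1, …, D_n be pairwise commuting locally nilpotent k-derivations of A, linearly independent over A, and let f ∈ A \ k with A^{D_1,…,D_n} = k[f]. Then for each i ∈ {1,…,n} there exists p_i ∈ A such that D_j(p_i) = 0 for all j ≠ i and D_i(p_i) is a nonzero element of k[f]; furthermore, every element of A is algebraic over the k-subalgebra generated by p_1, …, p_n, f. -/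
/-!
If `r` is a local slice of `D i` (`D i r ≠ 0 = D i (D i r)`) inside a `D i`-stable subalgebra `B`,
integrating term by term shows that every `x ∈ B` satisfies `(D i r) ^ N * x = ∑ b m * r ^ m` with
`b m ∈ B` and `D i (b m) = 0`. Taking `B = commonKer D s`, a derivation that kills `r` and
`commonKer D (insert i s)` kills `commonKer D s`; so independence of the `D j` passes to their
restrictions to common kernels, `D i` is nonzero on `commonKer D {i}ᶜ`, and iterating `D i` on a
witness gives `p i`. Expanding along `p i` for one `i` after another shows that every element of
`A` times a nonzero element of the algebra generated by the `p i` and the common kernel lies in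
that algebra.
-/

/-- A derivation is locally nilpotent if every element is killed by some iterate. -/
def Derivation.IsLocallyNilpotent {k A : Type*} [CommRing k] [CommRing A] [Algebra k A]
    (D : Derivation k A A) : Prop :=
  ∀ a : A, ∃ m : ℕ, 1 ≤ m ∧ (fun x => D x)^[m] a = 0

open Finset

namespace Derivation

section CommRing

variable {k A : Type*} [CommRing k] [CommRing A] [Algebra k A]

theorem IsLocallyNilpotent.exists_slice {D : Derivation k A A} (hD : D.IsLocallyNilpotent)
    {B : Set A} (hB : ∀ x ∈ B, D x ∈ B) {b : A} (hb : b ∈ B) (hDb : D b ≠ 0) :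
    ∃ r ∈ B, D r ≠ 0 ∧ D (D r) = 0 := by
  obtain ⟨m, -, hm⟩ := hD b
  induction m generalizing b with
  | zero => exact absurd (by simp [show b = 0 from hm]) hDb
  | succ m ih =>
    by_cases hDDb : D (D b) = 0
    · exact ⟨b, hb, hDb, hDDb⟩
    · exact ih (hB b hb) hDDb hm

variable {ι : Type*}

def commonKer (D : ι → Derivation k A A) (s : Set ι) : Subalgebra k A where
  carrier := {x | ∀ j ∈ s, D j x = 0}
  mul_mem' hx hy j hj := by simp [leibniz, hx j hj, hy j hj]
  add_mem' hx hy j hj := by simp [hx j hj, hy j hj]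
  algebraMap_mem' c j _ := (D j).map_algebraMap c

theorem sum_smul_apply [Fintype ι] (a : ι → A) (D : ι → Derivation k A A) (x : A) :
    (∑ j, a j • D j) x = ∑ j, a j * D j x := by
  rw [← coeFnAddMonoidHom_apply, map_sum]
  simp

theorem commonKer_anti (D : ι → Derivation k A A) : Antitone (commonKer D) :=
  fun _ _ hst _ hx j hj => hx j (hst hj)

theorem map_mem_commonKer {D : ι → Derivation k A A} (hcomm : ∀ i j x, D i (D j x) = D j (D i x))
    (i : ι) {s : Set ι} {x : A} (hx : x ∈ commonKer D s) : D i x ∈ commonKer D s :=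
  fun j hj => by rw [hcomm, hx j hj, map_zero]

theorem map_mem_commonKer_univ {D : ι → Derivation k A A}
    (hcomm : ∀ i j x, D i (D j x) = D j (D i x)) {i : ι} {r : A} (hr : r ∈ commonKer D {i}ᶜ)
    (hDDr : D i (D i r) = 0) : D i r ∈ commonKer D Set.univ := by
  intro j _
  by_cases hj : j = i
  · rwa [hj]
  · rw [hcomm, hr j hj, map_zero]

/-- The `D j` with `j ∉ s`, restricted to `commonKer D s`, are linearly independent over it. -/
def IndependentOn [Fintype ι] (D : ι → Derivation k A A) (s : Set ι) : Prop :=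
  ∀ a : ι → A, (∀ j, a j ∈ commonKer D s) → (∀ j ∈ s, a j = 0) →
    (∀ x ∈ commonKer D s, ∑ j, a j * D j x = 0) → ∀ j, a j = 0

theorem IndependentOn.exists_ne_zero [Nontrivial A] [Fintype ι] [DecidableEq ι]
    {D : ι → Derivation k A A} {s : Set ι} (h : IndependentOn D s) {i : ι} (hi : i ∉ s) :
    ∃ x ∈ commonKer D s, D i x ≠ 0 := by
  by_contra! hzero
  have := h (fun j => if j = i then 1 else 0)
    (fun j => by split_ifs <;> simp only [one_mem, zero_mem])
    (fun j hj => if_neg (ne_of_mem_of_not_mem hj hi))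
    (fun x hx => by simp [hzero x hx]) i
  simp at this

end CommRing

section CharZero

variable {k A : Type*} [Field k] [CharZero k] [CommRing A] [Algebra k A] (D : Derivation k A A)

theorem map_inv_smul_mul_pow_succ {b : A} (hb : D b = 0) (r : A) (m : ℕ) :
    D (((m : k) + 1)⁻¹ • (b * r ^ (m + 1))) = b * r ^ m * D r := by
  have hm : ((m : k) + 1) ≠ 0 := by exact_mod_cast m.succ_ne_zero
  rw [map_smul, leibniz, hb, smul_zero, add_zero, leibniz_pow, Nat.add_sub_cancel,
    ← Nat.cast_smul_eq_nsmul k, Nat.cast_succ, smul_comm, inv_smul_smul₀ hm, smul_eq_mul,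
    smul_eq_mul]
  ring

theorem exists_pow_mul_eq_sum_mul_pow (hD : D.IsLocallyNilpotent) {B : Subalgebra k A}
    (hB : ∀ x ∈ B, D x ∈ B) {r : A} (hr : r ∈ B) (hDDr : D (D r) = 0) {a : A} (ha : a ∈ B) :
    ∃ (N M : ℕ) (b : ℕ → A), (∀ m, b m ∈ B ∧ D (b m) = 0) ∧
      D r ^ N * a = ∑ m ∈ range M, b m * r ^ m := by
  obtain ⟨s, -, hs⟩ := hD a
  induction s generalizing a with
  | zero => exact ⟨0, 0, 0, fun _ => ⟨B.zero_mem, map_zero D⟩, by simp [show a = 0 from hs]⟩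
  | succ s ih =>
    obtain ⟨N, M, b, hb, hrep⟩ := ih (hB a ha) hs
    set c := D r
    set q := ∑ m ∈ range M, ((m : k) + 1)⁻¹ • (b m * r ^ (m + 1))
    have hq : q ∈ B := sum_mem fun m _ =>
      B.smul_mem (mul_mem (hb m).1 (pow_mem hr _)) _
    -- `q` is an antiderivative of `c ^ (N + 1) * D a`, so `c ^ (N + 1) * a - q` is a constant.
    have hDq : D q = c * (c ^ N * D a) := by
      simp only [q, map_sum, map_inv_smul_mul_pow_succ D (hb _).2, hrep, mul_sum]
      exact sum_congr rfl fun m _ => by ring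
    have hw : c ^ (N + 1) * a - q ∈ B ∧ D (c ^ (N + 1) * a - q) = 0 := by
      refine ⟨sub_mem (mul_mem (pow_mem (hB r hr) _) ha) hq, ?_⟩
      simp only [map_sub, leibniz, leibniz_pow, hDDr, hDq, smul_eq_mul]
      ring
    refine ⟨N + 1, M + 1, fun m => m.casesOn (c ^ (N + 1) * a - q) fun m => ((m : k) + 1)⁻¹ • b m,
      ?_, ?_⟩
    · rintro (_ | m)
      exacts [hw, ⟨B.smul_mem (hb m).1 _, by rw [map_smul, (hb m).2, smul_zero]⟩]
    · simp only [sum_range_succ', Nat.rec_zero, smul_mul_assoc, pow_zero, mul_one, q]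
      ring

end CharZero

section IsDomain

variable {k A : Type*} [Field k] [CharZero k] [CommRing A] [IsDomain A] [Algebra k A]

theorem IsLocallyNilpotent.eq_zero_of_eq_zero_on_ker {D : Derivation k A A}
    (hD : D.IsLocallyNilpotent) {B : Subalgebra k A} (hB : ∀ x ∈ B, D x ∈ B) {r : A}
    (hr : r ∈ B) (hDr : D r ≠ 0) (hDDr : D (D r) = 0) {E : Derivation k A A}
    (hE : ∀ x ∈ B, D x = 0 → E x = 0) (hEr : E r = 0) {x : A} (hx : x ∈ B) : E x = 0 := by
  obtain ⟨N, M, b, hb, hrep⟩ := D.exists_pow_mul_eq_sum_mul_pow hD hB hr hDDr hx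
  have hEc : E (D r) = 0 := hE _ (hB r hr) hDDr
  have : D r ^ N * E x = 0 := by
    simpa only [leibniz, leibniz_pow, hEc, map_sum, hEr, fun m => hE _ (hb m).1 (hb m).2,
      smul_zero, mul_zero, add_zero, smul_eq_mul, sum_const_zero] using congrArg E hrep
  exact (mul_eq_zero.mp this).resolve_left (pow_ne_zero _ hDr)

section Family

variable {ι : Type*} [Fintype ι] [DecidableEq ι] {D : ι → Derivation k A A}

theorem IndependentOn.insert (hLN : ∀ i, (D i).IsLocallyNilpotent)
    (hcomm : ∀ i j x, D i (D j x) = D j (D i x)) {s : Set ι} (h : IndependentOn D s) {i : ι}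
    (hi : i ∉ s) : IndependentOn D (insert i s) := by
  have hstable : ∀ j, ∀ x ∈ commonKer D s, D j x ∈ commonKer D s :=
    fun j _ => map_mem_commonKer hcomm j
  obtain ⟨b, hb, hDb⟩ := h.exists_ne_zero hi
  obtain ⟨r, hr, hDr, hDDr⟩ := (hLN i).exists_slice (hstable i) hb hDb
  intro a ha hai hsum
  have ha' : ∀ j, a j ∈ commonKer D s := fun j => commonKer_anti D (Set.subset_insert i s) (ha j)
  set e := ∑ j, a j * D j r
  -- `∑ a' j • D j = D i r • ∑ a j • D j - e • D i` kills `r` and `commonKer D (insert i s)`.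
  set a' : ι → A := fun j => D i r * a j - if j = i then e else 0
  have hE : ∀ x, ∑ j, a' j * D j x = D i r * ∑ j, a j * D j x - e * D i x := fun x => by
    simp [a', sub_mul, sum_sub_distrib, mul_sum, mul_assoc]
  have hE_ker : ∀ x ∈ commonKer D s, D i x = 0 → ∑ j, a' j * D j x = 0 := fun x hx hDx => by
    rw [hE, hsum x (fun j hj => hj.elim (· ▸ hDx) (hx j)), hDx, mul_zero, mul_zero, sub_zero]
  have hE_r : ∑ j, a' j * D j r = 0 := by rw [hE]; ring
  have hE_zero : ∀ x ∈ commonKer D s, ∑ j, a' j * D j x = 0 := fun x hx => by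
    simpa only [sum_smul_apply] using (hLN i).eq_zero_of_eq_zero_on_ker (hstable i) hr hDr hDDr
      (E := ∑ j, a' j • D j) (by simpa only [sum_smul_apply] using hE_ker)
      (by simpa only [sum_smul_apply] using hE_r) hx
  have ha'_zero := h a' (fun j => sub_mem (mul_mem (hstable i r hr) (ha' j)) (by
      split_ifs
      exacts [sum_mem fun j _ => mul_mem (ha' j) (hstable j r hr), zero_mem _]))
    (fun j hj => by simp [a', hai j (Or.inr hj), ne_of_mem_of_not_mem hj hi]) hE_zero
  intro j
  by_cases hj : j = i
  · exact hai j (Or.inl hj)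
  · simpa [a', hj, hDr] using ha'_zero j

theorem independentOn (hLN : ∀ i, (D i).IsLocallyNilpotent)
    (hcomm : ∀ i j x, D i (D j x) = D j (D i x))
    (hindep : ∀ a : ι → A, (∀ x : A, ∑ i, a i * D i x = 0) → ∀ i, a i = 0) (s : Set ι) :
    IndependentOn D s := by
  induction s, s.toFinite using Set.Finite.induction_on with
  | empty => exact fun a _ _ hsum => hindep a fun x => hsum x fun _ h => h.elim
  | insert hi _ ih => exact ih.insert hLN hcomm hi

theorem exists_slice_mem_commonKer_compl
    (hLN : ∀ i, (D i).IsLocallyNilpotent) (hcomm : ∀ i j x, D i (D j x) = D j (D i x))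
    (hindep : ∀ a : ι → A, (∀ x : A, ∑ i, a i * D i x = 0) → ∀ i, a i = 0) (i : ι) :
    ∃ r ∈ commonKer D {i}ᶜ, D i r ≠ 0 ∧ D i (D i r) = 0 := by
  obtain ⟨b, hb, hDb⟩ :=
    (independentOn hLN hcomm hindep {i}ᶜ).exists_ne_zero (Set.notMem_compl_iff.mpr rfl)
  exact (hLN i).exists_slice (fun _ => map_mem_commonKer hcomm i) hb hDb

end Family

theorem isAlgebraic_of_slices {ι : Type*} [Finite ι] {D : ι → Derivation k A A}
    (hLN : ∀ i, (D i).IsLocallyNilpotent) (hcomm : ∀ i j x, D i (D j x) = D j (D i x))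
    {S : Subalgebra k A} (hS : commonKer D Set.univ ≤ S) {p : ι → A} (hpS : ∀ i, p i ∈ S)
    (hp : ∀ i, p i ∈ commonKer D {i}ᶜ) (hDp : ∀ i, D i (p i) ≠ 0)
    (hDDp : ∀ i, D i (D i (p i)) = 0) (a : A) : IsAlgebraic S a := by
  have halg {x : A} (hx : x ∈ S) : IsAlgebraic S x := isAlgebraic_algebraMap (⟨x, hx⟩ : S)
  suffices h : ∀ s : Set ι, ∀ a ∈ commonKer D sᶜ, IsAlgebraic S a from
    h Set.univ a fun _ h => h.elim trivial
  intro s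
  induction s, s.toFinite using Set.Finite.induction_on with
  | empty =>
    intro a ha
    exact halg (hS fun j _ => ha j (Set.notMem_empty j))
  | @insert i s hi _ ih =>
    intro a ha
    have hpB : p i ∈ commonKer D (insert i s)ᶜ :=
      commonKer_anti D (Set.compl_subset_compl.mpr (by simp)) (hp i)
    obtain ⟨N, M, b, hb, hrep⟩ := (D i).exists_pow_mul_eq_sum_mul_pow (hLN i)
      (fun _ => map_mem_commonKer hcomm i) hpB (hDDp i) ha
    have hc := halg (hS (map_mem_commonKer_univ hcomm (hp i) (hDDp i)))
    have hb' : ∀ m, IsAlgebraic S (b m) := fun m => ih (b m) fun j hj => by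
      by_cases hji : j = i
      · exact hji ▸ (hb m).2
      · exact (hb m).1 j fun h => h.elim hji hj
    refine IsAlgebraic.of_mul (y := D i (p i) ^ N)
      (mem_nonZeroDivisors_of_ne_zero (pow_ne_zero _ (hDp i))) (hc.pow N) ?_
    rw [hrep]
    exact Subalgebra.sum_mem (Subalgebra.algebraicClosure S A) fun m _ =>
      mul_mem (hb' m) (pow_mem (halg (hpS i)) m)

end IsDomain

end Derivation

theorem statement4_general (k : Type*) [Field k] [CharZero k] (n : ℕ)
    (A : Type*) [CommRing A] [IsDomain A] [Algebra k A]
    (D : Fin n → Derivation k A A)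
    (hLN : ∀ i, (D i).IsLocallyNilpotent)
    (hcomm : ∀ i j, ∀ x : A, D i (D j x) = D j (D i x))
    (hindep : ∀ a : Fin n → A,
      (∀ x : A, ∑ i, a i * D i x = 0) → ∀ i, a i = 0)
    (f : A)
    (hker : {a : A | ∀ i, D i a = 0} = (Algebra.adjoin k {f} : Subalgebra k A)) :
    ∃ p : Fin n → A,
      (∀ i j, j ≠ i → D j (p i) = 0) ∧
      (∀ i, D i (p i) ∈ Algebra.adjoin k {f} ∧ D i (p i) ≠ 0) ∧
      (∀ a : A, IsAlgebraic (Algebra.adjoin k (Set.range p ∪ {f})) a) := by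
  choose p hp hDp hDDp using Derivation.exists_slice_mem_commonKer_compl hLN hcomm hindep
  have hker_adjoin : Derivation.commonKer D Set.univ ≤ Algebra.adjoin k {f} := fun x hx => by
    rw [← SetLike.mem_coe, ← hker]
    exact fun j => hx j trivial
  refine ⟨p, fun i j hji => hp i j hji, fun i => ⟨?_, hDp i⟩, ?_⟩
  · exact hker_adjoin (Derivation.map_mem_commonKer_univ hcomm (hp i) (hDDp i))
  · refine Derivation.isAlgebraic_of_slices hLN hcomm (hker_adjoin.trans ?_)
      (fun i => Algebra.subset_adjoin (Or.inl ⟨i, rfl⟩)) hp hDp hDDp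
    exact Algebra.adjoin_mono Set.subset_union_right

theorem statement4 (k : Type*) [Field k] [CharZero k] (n : ℕ) (hn : 1 ≤ n)
    (A : Type*) [CommRing A] [IsDomain A] [UniqueFactorizationMonoid A] [Algebra k A]
    (htrdeg : ∃ b : Fin (n + 1) → FractionRing A, IsTranscendenceBasis k b)
    (hunits : ∀ a : A, IsUnit a → ∃ c : k, algebraMap k A c = a)
    (D : Fin n → Derivation k A A)
    (hLN : ∀ i, (D i).IsLocallyNilpotent)
    (hcomm : ∀ i j, ∀ x : A, D i (D j x) = D j (D i x))
    (hindep : ∀ a : Fin n → A,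
      (∀ x : A, ∑ i, a i * D i x = 0) → ∀ i, a i = 0)
    (f : A) (hf : f ∉ (algebraMap k A).range)
    (hker : {a : A | ∀ i, D i a = 0} = (Algebra.adjoin k {f} : Subalgebra k A)) :
    ∃ p : Fin n → A,
      (∀ i j, j ≠ i → D j (p i) = 0) ∧
      (∀ i, D i (p i) ∈ Algebra.adjoin k {f} ∧ D i (p i) ≠ 0) ∧
      (∀ a : A, IsAlgebraic (Algebra.adjoin k (Set.range p ∪ {f})) a) :=
  statement4_general k n A D hLN hcomm hindep f hker
end

section
/- Let k be a field of characteristic zero, let n ≥ 1, and let A be an integral domain containing k that is a unique factorization domain, whose fraction field has transcendence degree n+1 over k, and with A* = k*. Let D_1, …, D_n be pairwise commuting locally nilpotent k-derivations of A, linearly independent over A, and let f ∈ A \ k with A^{D_1,…,D_n} = k[f]. Define ℳ to be the set of all k-derivations E of A for which there exist a nonzero polynomial q ∈ k[X] and polynomials g_1, …, g_n ∈ k[X] such that q(f)·E(x) = g_1(f)·D_1(x) + ⋯ + g_n(f)·D_n(x) for all x ∈ A. Then there exist E_1, …, E_n ∈ ℳ that are pairwise commuting locally nilpotent k-derivations of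 A, linearly independent over A, such that every E ∈ ℳ can be written uniquely as E = h_1(f)·E_1 + ⋯ + h_n(f)·E_n with h_1, …, h_n ∈ k[X] (i.e., ℳ is a free k[f]-module with basis E_1, …, E_n). Moreover, for every α ∈ k, if D_1, …, D_n are linearly independent modulo (f − α), then E_1, …, E_n are also linearly independent modulo (f − α). -/
/-- A family of derivations is linearly independent modulo an ideal `I` if any `A`-linear
combination of them taking all its values in `I` has all coefficients in `I`. -/
def LinIndepModulo {k A : Type*} [CommRing k] [CommRing A] [Algebra k A] {n : ℕ}
    (D : Fin n → Derivation k A A) (I : Ideal A) : Prop :=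
  ∀ a : Fin n → A, (∀ x : A, ∑ i, a i * D i x ∈ I) → ∀ i, a i ∈ I

/-!
Since `Aˣ = kˣ` and `f ∉ k`, `f` is transcendental over `k`. Fix `x` with
`Δ = det (D i (x j)) ≠ 0`. If `q(f) • E = ∑ gᵢ(f) • Dᵢ` with `q, g₁, …, gₙ` coprime, Cramer's rule
and a Bézout identity show `q(f) ∣ Δ`; as `A` is factorial with `Aˣ = kˣ`, only finitely many
monic `q` qualify, so one `q₀` is a common denominator for all of `ℳ`. The numerators over `q₀`
form a `k[X]`-submodule of `k[X]ⁿ`, which over the PID `k[X]` is spanned by `n` vectors; these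
give `E₁, …, Eₙ`.

Every element of `ℳ` is locally nilpotent, since `q(f) • E` is a sum of the commuting locally
nilpotent derivations `gᵢ(f) • Dᵢ`, and any two commute, since `q(f) q'(f) [E, E'] = 0`.
Writing `D = H(f) E`, one gets `H G = q₀`, so `det H(f) ≠ 0` and the `Eᵢ` are independent. Modulo
`f - α`, `H(f)` becomes the scalar matrix `H(α)`, which is invertible unless `(f - α) = A`.
-/

open Polynomial

theorem Matrix.exists_det_ne_zero_of_linearIndependent {A : Type*} [CommRing A] [Nontrivial A] :
    ∀ {m : ℕ} {v : Fin m → A → A}, LinearIndependent A v →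
      ∃ x : Fin m → A, (Matrix.of fun i j => v i (x j)).det ≠ 0
  | 0, _, _ => ⟨finZeroElim, by simp⟩
  | m + 1, v, hv => by
    obtain ⟨x, hx⟩ := exists_det_ne_zero_of_linearIndependent
      (hv.comp Fin.castSucc (Fin.castSucc_injective m))
    let N : A → Matrix (Fin (m + 1)) (Fin (m + 1)) A := fun y =>
      Matrix.of fun i j => v i ((Fin.snoc x y : Fin (m + 1) → A) j)
    -- by Cramer's rule, `det (N y)` is an `A`-linear combination of the `v i y`
    have hexpand : ∀ y, (N y).det = ∑ i, (N 0).adjugate (Fin.last m) i * v i y := by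
      intro y
      have : N y = (N 0).updateCol (Fin.last m) fun i => v i y := by
        ext i j
        refine Fin.lastCases ?_ (fun j => ?_) j <;> simp [N]
      rw [this, ← cramer_apply, cramer_eq_adjugate_mulVec, mulVec, dotProduct]
    have hlast : (N 0).adjugate (Fin.last m) (Fin.last m) ≠ 0 := by
      rw [adjugate_fin_succ_eq_det_submatrix]
      simpa [N, Fin.succAbove_last, Matrix.submatrix] using hx
    by_contra! h
    refine hlast (Fintype.linearIndependent_iff.mp hv _ (funext fun y => ?_) _)
    simpa [← hexpand] using h (Fin.snoc x y)

theorem Matrix.dvd_det_of_vecMul_eq_smul {R ι : Type*} [CommRing R] [Fintype ι] [DecidableEq ι]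
    (N : Matrix ι ι R) {v u c : ι → R} {r c₀ : R} (hvN : vecMul v N = r • u)
    (hbezout : c₀ * r + ∑ i, c i * v i = 1) : r ∣ N.det := by
  have hcramer : N.det • v = r • vecMul u N.adjugate := by
    rw [← smul_vecMul, ← hvN, vecMul_vecMul, mul_adjugate, vecMul_smul, vecMul_one]
  have hentry : ∀ i, N.det * v i = r * vecMul u N.adjugate i := fun i => congrFun hcramer i
  refine ⟨c₀ * N.det + ∑ i, c i * vecMul u N.adjugate i, ?_⟩
  calc N.det = N.det * (c₀ * r + ∑ i, c i * v i) := by rw [hbezout, mul_one]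
    _ = _ := by
      simp only [mul_add, Finset.mul_sum]
      congr 1
      · ring
      · exact Finset.sum_congr rfl fun i _ => by linear_combination c i * hentry i

theorem Submodule.exists_spanning_family_pi {R : Type*} [CommRing R] [IsDomain R]
    [IsPrincipalIdealRing R] {n : ℕ} (N : Submodule R (Fin n → R)) :
    ∃ G : Fin n → Fin n → R, (∀ i, G i ∈ N) ∧ ∀ g ∈ N, ∃ h : Fin n → R, g = ∑ i, h i • G i := by
  obtain ⟨m, b⟩ := N.basisOfPid (Pi.basisFun R (Fin n))
  have hmn : m ≤ n := by
    simpa using (Pi.basisFun R (Fin n)).card_le_card_of_linearIndependent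
      (b.linearIndependent.map' N.subtype N.ker_subtype)
  let e : Fin m → Fin n := Fin.castLE hmn
  have he : Function.Injective e := Fin.castLE_injective hmn
  refine ⟨Function.extend e (fun j => (b j : Fin n → R)) 0, fun i => ?_, fun g hg => ?_⟩
  · by_cases hi : ∃ j, e j = i
    · obtain ⟨j, rfl⟩ := hi
      simp [he.extend_apply]
    · simp [Function.extend_apply' _ _ _ hi, N.zero_mem]
  · refine ⟨Function.extend e (b.repr ⟨g, hg⟩) 0, ?_⟩
    have := congrArg Subtype.val (b.sum_repr ⟨g, hg⟩)
    simp only [AddSubmonoidClass.coe_finsetSum, SetLike.val_smul] at this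
    refine this.symm.trans <| Fintype.sum_of_injective e he _ _ (fun i hi => ?_)
      (fun j => by simp [he.extend_apply])
    simp [Function.extend_apply' _ _ _ (by simpa using hi)]

section LinIndepModulo

variable {k A : Type*} [CommRing k] [CommRing A] [Algebra k A] {n : ℕ}

theorem linIndepModulo_bot_iff {D : Fin n → Derivation k A A} :
    LinIndepModulo D ⊥ ↔ ∀ a : Fin n → A, (∀ x, ∑ i, a i * D i x = 0) → ∀ i, a i = 0 := by
  simp only [LinIndepModulo, Ideal.mem_bot]

theorem LinIndepModulo.of_eq_sum_mul {D E : Fin n → Derivation k A A} {I : Ideal A}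
    (H : Matrix (Fin n) (Fin n) A) (hDE : ∀ l x, D l x = ∑ i, H l i * E i x)
    (hH : ∀ a, H.det * a ∈ I → a ∈ I) (hD : LinIndepModulo D I) : LinIndepModulo E I := by
  intro a ha
  set c := Matrix.vecMul a H.adjugate
  have hcH : ∀ i, ∑ l, c l * H l i = H.det * a i := fun i => by
    simpa [Matrix.vecMul, dotProduct] using congrFun
      (by rw [Matrix.vecMul_vecMul, Matrix.adjugate_mul, Matrix.vecMul_smul, Matrix.vecMul_one] :
        Matrix.vecMul c H = H.det • a) i
  have hc : ∀ l, c l ∈ I := by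
    refine hD c fun x => ?_
    have : ∑ l, c l * D l x = H.det * ∑ i, a i * E i x := by
      simp only [hDE, Finset.mul_sum, ← mul_assoc]
      rw [Finset.sum_comm]
      exact Finset.sum_congr rfl fun i _ => by rw [← Finset.sum_mul, hcH]
    exact this ▸ I.mul_mem_left _ (ha x)
  exact fun i => hH _ (hcH i ▸ I.sum_mem fun l _ => I.mul_mem_right _ (hc l))

end LinIndepModulo

theorem Ideal.Quotient.mk_aeval_of_span_sub {k A : Type*} [CommRing k] [CommRing A] [Algebra k A]
    {f : A} (α : k) (p : k[X]) :
    Ideal.Quotient.mk (Ideal.span {f - algebraMap k A α}) (aeval f p) =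
      algebraMap k _ (p.eval α) := by
  have hf : Ideal.Quotient.mkₐ k (Ideal.span {f - algebraMap k A α}) f =
      algebraMap k _ α := by
    rw [← AlgHom.commutes (Ideal.Quotient.mkₐ k _), Ideal.Quotient.mkₐ_eq_mk,
      Ideal.Quotient.eq, Ideal.mem_span_singleton]
  rw [← Ideal.Quotient.mkₐ_eq_mk k, ← aeval_algHom_apply, hf, aeval_algebraMap_apply,
    coe_aeval_eq_eval]

namespace Derivation

variable {k A : Type*} [CommRing k] [CommRing A] [Algebra k A]

theorem finsetSum_apply {ι : Type*} (s : Finset ι) (D : ι → Derivation k A A) (x : A) :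
    (∑ i ∈ s, D i) x = ∑ i ∈ s, D i x := by
  rw [← coeFnAddMonoidHom_apply, map_sum, Finset.sum_apply]
  rfl

theorem isLocallyNilpotent_iff_maxGenEigenspace_eq_top (D : Derivation k A A) :
    D.IsLocallyNilpotent ↔ Module.End.maxGenEigenspace (D : A →ₗ[k] A) 0 = ⊤ := by
  simp only [IsLocallyNilpotent, Submodule.eq_top_iff', Module.End.mem_maxGenEigenspace,
    zero_smul, sub_zero, Module.End.pow_apply, coeFn_coe]
  refine forall_congr' fun a => ⟨fun ⟨m, _, hm⟩ => ⟨m, hm⟩, fun ⟨m, hm⟩ => ⟨m + 1, by omega, ?_⟩⟩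
  rw [Function.iterate_succ_apply', hm, map_zero]

theorem IsLocallyNilpotent.add {D D' : Derivation k A A} (hcomm : ∀ x, D (D' x) = D' (D x))
    (hD : D.IsLocallyNilpotent) (hD' : D'.IsLocallyNilpotent) : (D + D').IsLocallyNilpotent := by
  rw [isLocallyNilpotent_iff_maxGenEigenspace_eq_top] at *
  have := Module.End.genEigenspace_inf_le_add (D : Module.End k A) D' 0 0 ⊤ ⊤
    (LinearMap.ext hcomm)
  rw [add_zero, top_add, ← coe_add_linearMap] at this
  change Module.End.maxGenEigenspace _ 0 ⊓ Module.End.maxGenEigenspace _ 0 ≤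
    Module.End.maxGenEigenspace _ 0 at this
  rwa [hD, hD', inf_top_eq, top_le_iff] at this

theorem isLocallyNilpotent_sum {ι : Type*} (s : Finset ι) (D : ι → Derivation k A A)
    (hcomm : ∀ i j x, D i (D j x) = D j (D i x)) (hD : ∀ i, (D i).IsLocallyNilpotent) :
    (∑ i ∈ s, D i).IsLocallyNilpotent := by
  classical
  induction s using Finset.induction_on with
  | empty => exact fun a => ⟨1, le_rfl, rfl⟩
  | insert i s _ ih =>
    rw [Finset.sum_insert ‹_›]
    refine (hD i).add (fun x => ?_) ih
    simp [finsetSum_apply, hcomm i]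

theorem iterate_smul_apply (D : Derivation k A A) {c : A} (hc : D c = 0) (m : ℕ) (a : A) :
    (fun x => (c • D) x)^[m] a = c ^ m * (fun x => D x)^[m] a := by
  induction m with
  | zero => simp
  | succ m ih =>
    rw [Function.iterate_succ_apply', Function.iterate_succ_apply', ih, smul_apply,
      leibniz, leibniz_pow, hc]
    simp only [smul_eq_mul, pow_succ']
    ring

theorem IsLocallyNilpotent.smul {D : Derivation k A A} {c : A} (hc : D c = 0)
    (hD : D.IsLocallyNilpotent) : (c • D).IsLocallyNilpotent := fun a =>
  let ⟨m, hm, hma⟩ := hD a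
  ⟨m, hm, by rw [iterate_smul_apply D hc, hma, mul_zero]⟩

theorem IsLocallyNilpotent.of_smul {D : Derivation k A A} {c : A} (hc : D c = 0)
    (hc₀ : c ∈ nonZeroDivisors A) (hD : (c • D).IsLocallyNilpotent) : D.IsLocallyNilpotent :=
  fun a =>
  let ⟨m, hm, hma⟩ := hD a
  ⟨m, hm, (mul_left_mem_nonZeroDivisors_eq_zero_iff (pow_mem hc₀ m)).mp
    (iterate_smul_apply D hc m a ▸ hma)⟩

end Derivation

section Transcendence

variable {k A : Type*} [Field k] [CommRing A] [Algebra k A]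

theorem transcendental_of_forall_isUnit [IsDomain A]
    (hunits : ∀ a : A, IsUnit a → ∃ c : k, algebraMap k A c = a) {f : A}
    (hf : f ∉ (algebraMap k A).range) : Transcendental k f := fun halg =>
  have hf₀ : f ≠ 0 := fun h => hf ⟨0, by rw [h, map_zero]⟩
  hf (hunits f (halg.isIntegral.isUnit hf₀))

theorem finite_setOf_monic_aeval_dvd [UniqueFactorizationMonoid A]
    (hunits : ∀ a : A, IsUnit a → ∃ c : k, algebraMap k A c = a) {f : A}
    (hf : Transcendental k f) {Δ : A} (hΔ : Δ ≠ 0) :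
    {t : k[X] | t.Monic ∧ aeval f t ∣ Δ}.Finite := by
  have hdvd : {a : Associates A | a ∣ Associates.mk Δ}.Finite :=
    @Set.toFinite _ _ <| @Finite.of_fintype _ <|
      UniqueFactorizationMonoid.fintypeSubtypeDvd _ (Associates.mk_ne_zero.mpr hΔ)
  refine Set.Finite.of_finite_image (f := fun t => Associates.mk (aeval f t))
    (hdvd.subset ?_) ?_
  · rintro _ ⟨t, ⟨-, ht⟩, rfl⟩
    exact Associates.mk_dvd_mk.mpr ht
  · rintro t₁ ⟨ht₁, -⟩ t₂ ⟨ht₂, -⟩ h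
    obtain ⟨u, hu⟩ := Associates.mk_eq_mk_iff_associated.mp h
    obtain ⟨c, hc⟩ := hunits u u.isUnit
    have ht : t₁ * C c = t₂ :=
      transcendental_iff_injective.mp hf (by rw [map_mul, aeval_C, hc, hu])
    have hc₁ : c = 1 := by
      simpa [ht₁.leadingCoeff, ht₂.leadingCoeff] using congrArg leadingCoeff ht
    rw [← ht, hc₁, C_1, mul_one]

theorem exists_forall_aeval_dvd_imp_dvd [UniqueFactorizationMonoid A]
    (hunits : ∀ a : A, IsUnit a → ∃ c : k, algebraMap k A c = a) {f : A}
    (hf : Transcendental k f) {Δ : A} (hΔ : Δ ≠ 0) :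
    ∃ q₀ : k[X], q₀ ≠ 0 ∧ ∀ t : k[X], aeval f t ∣ Δ → t ∣ q₀ := by
  classical
  let S := (finite_setOf_monic_aeval_dvd hunits hf hΔ).toFinset
  refine ⟨∏ t ∈ S, t, Finset.prod_ne_zero_iff.mpr fun t ht => ?_, fun t ht => ?_⟩
  · exact (Set.Finite.mem_toFinset _ |>.mp ht).1.ne_zero
  have ht₀ : t ≠ 0 := by rintro rfl; simp [hΔ] at ht
  have hmem : t * C t.leadingCoeff⁻¹ ∈ S := by
    refine Set.Finite.mem_toFinset _ |>.mpr ⟨monic_mul_leadingCoeff_inv ht₀, ?_⟩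
    rw [map_mul, aeval_C]
    exact (IsUnit.mul_right_dvd ((isUnit_iff_ne_zero.mpr (inv_ne_zero
      (leadingCoeff_ne_zero.mpr ht₀))).map _)).mpr ht
  exact (dvd_mul_right t _).trans (Finset.dvd_prod_of_mem _ hmem)

end Transcendence

section FractionalCombination

variable {k A : Type*} [CommRing k] [CommRing A] [Algebra k A] {n : ℕ}

/-- `E = ∑ i, (g i / q)(f) • D i`, with the denominator cleared. -/
def IsFractionalCombination (D : Fin n → Derivation k A A) (f : A) (q : k[X])
    (g : Fin n → k[X]) (E : Derivation k A A) : Prop :=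
  ∀ x, aeval f q * E x = ∑ i, aeval f (g i) * D i x

variable {D : Fin n → Derivation k A A} {f : A}

theorem isFractionalCombination_single (q : k[X]) (l : Fin n) :
    IsFractionalCombination D f q (Pi.single l q) (D l) := fun x => by
  simp [Pi.single_apply, apply_ite (aeval f), ite_mul]

namespace IsFractionalCombination

variable {q q' : k[X]} {g g' : Fin n → k[X]} {E E' : Derivation k A A}

theorem add (hE : IsFractionalCombination D f q g E) (hE' : IsFractionalCombination D f q g' E') :
    IsFractionalCombination D f q (g + g') (E + E') := fun x => by
  simp [mul_add, hE x, hE' x, add_mul, Finset.sum_add_distrib]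

theorem smul (hE : IsFractionalCombination D f q g E) (p : k[X]) :
    IsFractionalCombination D f q (p • g) (aeval f p • E) := fun x => by
  simp [mul_left_comm _ (aeval f p), hE x, Finset.mul_sum, mul_assoc]

theorem mul_left (hE : IsFractionalCombination D f q g E) (p : k[X]) :
    IsFractionalCombination D f (p * q) (p • g) E := fun x => by
  simp [mul_assoc, hE x, Finset.mul_sum]

theorem of_mul_left [IsDomain A] {p : k[X]} (hp : aeval f p ≠ 0)
    (hE : IsFractionalCombination D f (p * q) (p • g) E) : IsFractionalCombination D f q g E :=
  fun x => mul_left_cancel₀ hp <| by simpa [mul_assoc, Finset.mul_sum] using hE x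

theorem smul_eq_sum (hE : IsFractionalCombination D f q g E) :
    aeval f q • E = ∑ i, aeval f (g i) • D i := by
  ext x
  simp [Derivation.finsetSum_apply, hE x]

theorem eq_sum [IsDomain A] {G : Fin n → Fin n → k[X]} {E : Fin n → Derivation k A A}
    {h : Fin n → k[X]} (hq : aeval f q ≠ 0) (hE : ∀ i, IsFractionalCombination D f q (G i) (E i))
    (hE' : IsFractionalCombination D f q (∑ i, h i • G i) E') (x : A) :
    E' x = ∑ i, aeval f (h i) * E i x := by
  refine mul_left_cancel₀ hq ?_
  calc aeval f q * E' x = ∑ i, aeval f (h i) * ∑ j, aeval f (G i j) * D j x := by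
        simp only [hE' x, Finset.sum_apply, Pi.smul_apply, smul_eq_mul, map_sum, map_mul,
          Finset.sum_mul, Finset.mul_sum, mul_assoc]
        exact Finset.sum_comm
    _ = aeval f q * ∑ i, aeval f (h i) * E i x := by
        simp only [← fun i => hE i x, Finset.mul_sum, mul_left_comm]

theorem map_aeval_eq_zero [IsDomain A] (hD : ∀ i, D i f = 0) (hq : aeval f q ≠ 0)
    (hE : IsFractionalCombination D f q g E) (p : k[X]) : E (aeval f p) = 0 := by
  have hEf : E f = 0 := by simpa [hD, hq] using hE f
  simp [hEf]

theorem mul_mul_apply_apply [IsDomain A] (hD : ∀ i, D i f = 0) (hq : aeval f q ≠ 0)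
    (hE : IsFractionalCombination D f q g E) (hE' : IsFractionalCombination D f q' g' E')
    (x : A) :
    aeval f q * aeval f q' * E (E' x) =
      ∑ j, ∑ i, aeval f (g' j) * (aeval f (g i) * D i (D j x)) := by
  have hEmul : ∀ (p : k[X]) y, E (aeval f p * y) = aeval f p * E y := fun p y => by
    simp [Derivation.leibniz, hE.map_aeval_eq_zero hD hq]
  calc aeval f q * aeval f q' * E (E' x) = aeval f q * E (aeval f q' * E' x) := by
        rw [hEmul, mul_assoc]
    _ = ∑ j, aeval f (g' j) * (aeval f q * E (D j x)) := by
        simp only [hE' x, map_sum, hEmul, Finset.mul_sum, mul_left_comm]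
    _ = _ := Finset.sum_congr rfl fun j _ => by rw [hE, Finset.mul_sum]

theorem commute [IsDomain A] (hD : ∀ i, D i f = 0) (hcomm : ∀ i j x, D i (D j x) = D j (D i x))
    (hq : aeval f q ≠ 0) (hq' : aeval f q' ≠ 0)
    (hE : IsFractionalCombination D f q g E) (hE' : IsFractionalCombination D f q' g' E')
    (x : A) : E (E' x) = E' (E x) := by
  have h := hE'.mul_mul_apply_apply hD hq' hE x
  rw [mul_comm (aeval f q'), Finset.sum_comm] at h
  refine mul_left_cancel₀ (mul_ne_zero hq hq') ?_
  rw [hE.mul_mul_apply_apply hD hq hE', h]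
  exact Finset.sum_congr rfl fun j _ => Finset.sum_congr rfl fun i _ => by
    rw [hcomm, mul_left_comm]

theorem isLocallyNilpotent [IsDomain A] (hD : ∀ i, D i f = 0)
    (hLN : ∀ i, (D i).IsLocallyNilpotent) (hcomm : ∀ i j x, D i (D j x) = D j (D i x))
    (hq : aeval f q ≠ 0) (hE : IsFractionalCombination D f q g E) : E.IsLocallyNilpotent := by
  have hDp : ∀ i (p : k[X]), D i (aeval f p) = 0 := by simp [hD]
  refine .of_smul (hE.map_aeval_eq_zero hD hq q) (mem_nonZeroDivisors_of_ne_zero hq) ?_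
  rw [hE.smul_eq_sum]
  refine Derivation.isLocallyNilpotent_sum _ _ (fun i j x => ?_) fun i => (hLN i).smul (hDp i _)
  simp only [Derivation.smul_apply, smul_eq_mul, Derivation.leibniz, hDp, hcomm i j]
  ring

theorem aeval_dvd_det {c₀ : k[X]} {c : Fin n → k[X]}
    (hE : IsFractionalCombination D f q g E)
    (hbezout : c₀ * q + ∑ i, c i * g i = 1) (x : Fin n → A) :
    aeval f q ∣ (Matrix.of fun i j => D i (x j)).det :=
  Matrix.dvd_det_of_vecMul_eq_smul _ (u := fun j => E (x j))
    (funext fun j => (hE (x j)).symm) (by simpa using congrArg (aeval f) hbezout)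

end IsFractionalCombination

variable (D f) in
def fractionalNumerators (q : k[X]) : Submodule k[X] (Fin n → k[X]) where
  carrier := {g | ∃ E, IsFractionalCombination D f q g E}
  add_mem' := fun ⟨E, hE⟩ ⟨E', hE'⟩ => ⟨E + E', hE.add hE'⟩
  zero_mem' := ⟨0, fun x => by simp⟩
  smul_mem' := fun p _ ⟨E, hE⟩ => ⟨aeval f p • E, hE.smul p⟩

end FractionalCombination

section Field

variable {k A : Type*} [Field k] [CommRing A] [Algebra k A] {n : ℕ}
  {D : Fin n → Derivation k A A} {f : A}

namespace IsFractionalCombination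

variable {q : k[X]} {g : Fin n → k[X]} {E : Derivation k A A}

theorem exists_bezout [IsDomain A] (hf : Transcendental k f) (hq : q ≠ 0)
    (hE : IsFractionalCombination D f q g E) :
    ∃ (q₁ : k[X]) (g₁ : Fin n → k[X]) (c₀ : k[X]) (c : Fin n → k[X]),
      q₁ ≠ 0 ∧ IsFractionalCombination D f q₁ g₁ E ∧ c₀ * q₁ + ∑ i, c i * g₁ i = 1 := by
  let v : Fin (n + 1) → k[X] := Fin.cons q g
  set d := Submodule.IsPrincipal.generator (Ideal.span (Set.range v))
  have hdvd : ∀ j, ∃ w, v j = d * w := fun j =>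
    (Submodule.IsPrincipal.mem_iff_generator_dvd _).mp (Ideal.subset_span ⟨j, rfl⟩)
  choose w hw using hdvd
  obtain ⟨c, hc⟩ := (Submodule.mem_span_range_iff_exists_fun k[X]).mp
    (Submodule.IsPrincipal.generator_mem (Ideal.span (Set.range v)))
  have hd : d ≠ 0 := by
    rintro hd
    exact hq (by simpa [v, hd] using hw 0)
  have hq₁ : q = d * w 0 := hw 0
  have hg₁ : g = d • fun i => w i.succ := funext fun i => hw i.succ
  refine ⟨w 0, fun i => w i.succ, c 0, fun i => c i.succ, right_ne_zero_of_mul (hq₁ ▸ hq),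
    (hq₁ ▸ hg₁ ▸ hE).of_mul_left ((transcendental_iff.mp hf d).mt hd), ?_⟩
  refine mul_left_cancel₀ hd ?_
  rw [mul_one, ← Fin.sum_univ_succ (f := fun j => c j * w j)]
  refine Eq.trans ?_ hc
  simp only [smul_eq_mul, hw, Finset.mul_sum]
  exact Finset.sum_congr rfl fun j _ => by ring

end IsFractionalCombination

/-- Reduced denominators `q` satisfy `q(f) ∣ det (D i (x j)) ≠ 0` for a fixed `x`, and a nonzero
element has only finitely many divisors `t(f)` with `t` monic. -/
theorem exists_common_denominator [IsDomain A] [UniqueFactorizationMonoid A]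
    (hunits : ∀ a : A, IsUnit a → ∃ c : k, algebraMap k A c = a) (hf : Transcendental k f)
    (hD : LinearIndependent A fun i => ⇑(D i)) :
    ∃ q₀ : k[X], q₀ ≠ 0 ∧ ∀ (q : k[X]) (g : Fin n → k[X]) (E : Derivation k A A), q ≠ 0 →
      IsFractionalCombination D f q g E → ∃ g₀, IsFractionalCombination D f q₀ g₀ E := by
  obtain ⟨x, hx⟩ := Matrix.exists_det_ne_zero_of_linearIndependent hD
  obtain ⟨q₀, hq₀, hdvd⟩ := exists_forall_aeval_dvd_imp_dvd hunits hf hx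
  refine ⟨q₀, hq₀, fun q g E hq hE => ?_⟩
  obtain ⟨q₁, g₁, c₀, c, -, hE₁, hbezout⟩ := hE.exists_bezout hf hq
  obtain ⟨s, rfl⟩ := hdvd q₁ (hE₁.aeval_dvd_det hbezout x)
  exact ⟨s • g₁, mul_comm q₁ s ▸ hE₁.mul_left s⟩

theorem exists_fractionalCombination_generators [IsDomain A] {q : k[X]} (hq : aeval f q ≠ 0) :
    ∃ (E : Fin n → Derivation k A A) (G : Fin n → Fin n → k[X]),
      (∀ i, IsFractionalCombination D f q (G i) (E i)) ∧
      ∀ g E', IsFractionalCombination D f q g E' →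
        ∃ h : Fin n → k[X], ∀ x, E' x = ∑ i, aeval f (h i) * E i x := by
  obtain ⟨G, hGN, hspan⟩ := (fractionalNumerators D f q).exists_spanning_family_pi
  choose E hE using hGN
  refine ⟨E, G, hE, fun g E' hE' => ?_⟩
  obtain ⟨h, rfl⟩ := hspan g ⟨E', hE'⟩
  exact ⟨h, hE'.eq_sum hq hE⟩

theorem det_map_aeval_ne_zero [IsDomain A] (hD : LinearIndependent A fun i => ⇑(D i)) {q : k[X]}
    (hq : aeval f q ≠ 0) {E : Fin n → Derivation k A A} {G H : Matrix (Fin n) (Fin n) k[X]}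
    (hE : ∀ i, IsFractionalCombination D f q (G i) (E i))
    (hDE : ∀ l x, D l x = ∑ i, aeval f (H l i) * E i x) : (H.map (aeval f)).det ≠ 0 := by
  have hHG : H.map (aeval f) * G.map (aeval f) = aeval f q • 1 := by
    ext l j
    refine sub_eq_zero.mp (Fintype.linearIndependent_iff.mp hD
      (fun j => (H.map (aeval f) * G.map (aeval f)) l j - (aeval f q • 1 : Matrix _ _ A) l j)
      (funext fun x => ?_) j)
    have : ∑ j, (H.map (aeval f) * G.map (aeval f)) l j * D j x = aeval f q * D l x := by
      simp only [Matrix.mul_apply, Matrix.map_apply, Finset.sum_mul, mul_assoc, hDE l,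
        Finset.mul_sum]
      rw [Finset.sum_comm]
      exact Finset.sum_congr rfl fun i _ => by rw [← Finset.mul_sum, ← hE i, mul_left_comm]
    simp [sub_mul, Finset.sum_sub_distrib, this, Matrix.one_apply]
  intro h0
  have := congrArg Matrix.det hHG
  rw [Matrix.det_mul, h0, zero_mul, Matrix.det_smul, Matrix.det_one, mul_one] at this
  exact pow_ne_zero _ hq this.symm

theorem mem_of_det_map_aeval_mul_mem {α : k} {E : Fin n → Derivation k A A}
    {H : Matrix (Fin n) (Fin n) k[X]} (hDE : ∀ l x, D l x = ∑ i, aeval f (H l i) * E i x)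
    (hD : LinIndepModulo D (Ideal.span {f - algebraMap k A α})) (a : A)
    (ha : (H.map (aeval f)).det * a ∈ Ideal.span {f - algebraMap k A α}) :
    a ∈ Ideal.span {f - algebraMap k A α} := by
  set I := Ideal.span {f - algebraMap k A α}
  have hφ : ∀ p, Ideal.Quotient.mk I (aeval f p) = algebraMap k _ (p.eval α) :=
    Ideal.Quotient.mk_aeval_of_span_sub α
  by_cases hdet : (H.map (eval α)).det = 0
  · -- then the `D l` are dependent modulo `I` unless `I = ⊤`
    obtain ⟨v, hv₀, hv⟩ := Matrix.exists_vecMul_eq_zero_iff.mpr hdet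
    obtain ⟨l, hl⟩ := Function.ne_iff.mp hv₀
    have hvI : ∀ x, ∑ l, algebraMap k A (v l) * D l x ∈ I := fun x => by
      rw [← Ideal.Quotient.eq_zero_iff_mem]
      simp only [hDE, Finset.mul_sum, map_sum, map_mul, hφ, Ideal.Quotient.mk_algebraMap,
        ← mul_assoc]
      rw [Finset.sum_comm]
      refine Finset.sum_eq_zero fun i _ => ?_
      simpa [← Finset.sum_mul, ← map_mul, ← map_sum, Matrix.vecMul, dotProduct] using
        congrArg (algebraMap k (A ⧸ I) · * Ideal.Quotient.mk I (E i x)) (congrFun hv i)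
    have hI : I = ⊤ := Ideal.eq_top_of_isUnit_mem _ (hD _ hvI l)
      ((isUnit_iff_ne_zero.mpr hl).map _)
    exact hI ▸ Submodule.mem_top
  · have hdet' : Ideal.Quotient.mk I (H.map (aeval f)).det =
        algebraMap k _ (H.map (eval α)).det := by
      rw [RingHom.map_det, RingHom.map_det]
      congr 1
      ext i j
      simp [hφ]
    rw [← Ideal.Quotient.eq_zero_iff_mem, map_mul, hdet'] at ha
    rw [← Ideal.Quotient.eq_zero_iff_mem]
    exact ((isUnit_iff_ne_zero.mpr hdet).map _).mul_right_eq_zero.mp ha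

end Field

theorem statement10_general (k : Type*) [Field k] (n : ℕ)
    (A : Type*) [CommRing A] [IsDomain A] [UniqueFactorizationMonoid A] [Algebra k A]
    (hunits : ∀ a : A, IsUnit a → ∃ c : k, algebraMap k A c = a)
    (D : Fin n → Derivation k A A)
    (hLN : ∀ i, (D i).IsLocallyNilpotent)
    (hcomm : ∀ i j, ∀ x : A, D i (D j x) = D j (D i x))
    (hindep : ∀ a : Fin n → A,
      (∀ x : A, ∑ i, a i * D i x = 0) → ∀ i, a i = 0)
    (f : A) (hf : f ∉ (algebraMap k A).range)
    (hker : {a : A | ∀ i, D i a = 0} = (Algebra.adjoin k {f} : Subalgebra k A))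
    (M : Set (Derivation k A A))
    (hM : M = {E : Derivation k A A | ∃ q : Polynomial k, q ≠ 0 ∧
      ∃ g : Fin n → Polynomial k, ∀ x : A,
        Polynomial.aeval f q * E x = ∑ i, Polynomial.aeval f (g i) * D i x}) :
    ∃ E : Fin n → Derivation k A A,
      (∀ i, E i ∈ M) ∧
      (∀ i, (E i).IsLocallyNilpotent) ∧
      (∀ i j, ∀ x : A, E i (E j x) = E j (E i x)) ∧
      (∀ a : Fin n → A, (∀ x : A, ∑ i, a i * E i x = 0) → ∀ i, a i = 0) ∧
      (∀ E' ∈ M, ∃! h : Fin n → Polynomial k,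
        ∀ x : A, E' x = ∑ i, Polynomial.aeval f (h i) * E i x) ∧
      (∀ α : k, LinIndepModulo D (Ideal.span {f - algebraMap k A α}) →
        LinIndepModulo E (Ideal.span {f - algebraMap k A α})) := by
  have hft : Transcendental k f := transcendental_of_forall_isUnit hunits hf
  have hDf : ∀ i, D i f = 0 :=
    (hker ▸ Algebra.self_mem_adjoin_singleton k f : f ∈ {a : A | ∀ i, D i a = 0})
  have hDli : LinearIndependent A fun i => ⇑(D i) := Fintype.linearIndependent_iff.mpr
    fun a ha => hindep a fun x => by simpa using congrFun ha x
  obtain ⟨q₀, hq₀, hden⟩ := exists_common_denominator hunits hft hDli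
  have hq₀f : aeval f q₀ ≠ 0 := (transcendental_iff.mp hft q₀).mt hq₀
  obtain ⟨E, G, hE, hspan⟩ := exists_fractionalCombination_generators (D := D) hq₀f
  choose H hDE using fun l => hspan _ _ (isFractionalCombination_single q₀ l)
  have hEli := (linIndepModulo_bot_iff.mpr hindep).of_eq_sum_mul _ hDE fun a ha =>
    Ideal.mem_bot.mpr <| (mul_eq_zero.mp (Ideal.mem_bot.mp ha)).resolve_left
      (det_map_aeval_ne_zero hDli hq₀f hE hDE)
  refine ⟨E, fun i => hM ▸ ⟨q₀, hq₀, G i, hE i⟩,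
    fun i => (hE i).isLocallyNilpotent hDf hLN hcomm hq₀f,
    fun i j => (hE i).commute hDf hcomm hq₀f hq₀f (hE j), linIndepModulo_bot_iff.mp hEli,
    fun E' hE' => ?_, fun α hα => hα.of_eq_sum_mul _ hDE (mem_of_det_map_aeval_mul_mem hDE hα)⟩
  obtain ⟨q, hq, g, hE'⟩ := hM ▸ hE'
  obtain ⟨h, hh⟩ := hspan _ E' (hden q g E' hq hE').choose_spec
  refine ⟨h, hh, fun h' hh' => funext fun i => transcendental_iff_injective.mp hft ?_⟩
  refine sub_eq_zero.mp (linIndepModulo_bot_iff.mp hEli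
    (fun i => aeval f (h' i) - aeval f (h i)) (fun x => ?_) i)
  simp [sub_mul, Finset.sum_sub_distrib, ← hh, ← hh']

theorem statement10 (k : Type*) [Field k] [CharZero k] (n : ℕ) (hn : 1 ≤ n)
    (A : Type*) [CommRing A] [IsDomain A] [UniqueFactorizationMonoid A] [Algebra k A]
    (htrdeg : ∃ b : Fin (n + 1) → FractionRing A, IsTranscendenceBasis k b)
    (hunits : ∀ a : A, IsUnit a → ∃ c : k, algebraMap k A c = a)
    (D : Fin n → Derivation k A A)
    (hLN : ∀ i, (D i).IsLocallyNilpotent)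
    (hcomm : ∀ i j, ∀ x : A, D i (D j x) = D j (D i x))
    (hindep : ∀ a : Fin n → A,
      (∀ x : A, ∑ i, a i * D i x = 0) → ∀ i, a i = 0)
    (f : A) (hf : f ∉ (algebraMap k A).range)
    (hker : {a : A | ∀ i, D i a = 0} = (Algebra.adjoin k {f} : Subalgebra k A))
    (M : Set (Derivation k A A))
    (hM : M = {E : Derivation k A A | ∃ q : Polynomial k, q ≠ 0 ∧
      ∃ g : Fin n → Polynomial k, ∀ x : A,
        Polynomial.aeval f q * E x = ∑ i, Polynomial.aeval f (g i) * D i x}) :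
    ∃ E : Fin n → Derivation k A A,
      (∀ i, E i ∈ M) ∧
      (∀ i, (E i).IsLocallyNilpotent) ∧
      (∀ i j, ∀ x : A, E i (E j x) = E j (E i x)) ∧
      (∀ a : Fin n → A, (∀ x : A, ∑ i, a i * E i x = 0) → ∀ i, a i = 0) ∧
      (∀ E' ∈ M, ∃! h : Fin n → Polynomial k,
        ∀ x : A, E' x = ∑ i, Polynomial.aeval f (h i) * E i x) ∧
      (∀ α : k, LinIndepModulo D (Ideal.span {f - algebraMap k A α}) →
        LinIndepModulo E (Ideal.span {f - algebraMap k A α})) :=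
  statement10_general k n A hunits D hLN hcomm hindep f hf hker M hM
end

section
/- Let k be a field of characteristic zero, let n ≥ 1, and let A be an integral domain containing k that is a unique factorization domain, whose fraction field has transcendence degree n+1 over k, and with A* = k*. Let D_1, …, D_n be pairwise commuting locally nilpotent k-derivations of A, linearly independent over A, and let f ∈ A \ k with A^{D_1,…,D_n} = k[f]. Suppose E and E' are k-derivations of A such that there exist nonzero polynomials q, q' ∈ k[X] and polynomials g_1, …, g_n, g'_1, …, g'_n ∈ k[X] with q(f)·E(x) = Σ_i g_i(f)·D_i(x) and q'(f)·E'(x) = Σ_i g'_i(f)·D_i(x) for all x ∈ A. Then E is a locally nilpotent derivation of A, and E ∘ E' = E' ∘ E. -/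
/-!
Every `D i` kills the polynomials in `f`, so `L = ∑ gᵢ(f) Dᵢ` is a sum of pairwise commuting
locally nilpotent operators, hence locally nilpotent, and it commutes with multiplication by
every `p(f)`. As `f` is not a constant and every unit of `A` is a constant, `f` is transcendental
over `k`, so `q(f)` is a nonzerodivisor. Then `q(f)ᵐ Eᵐ = Lᵐ` makes `E` locally nilpotent, and
`q(f) q'(f) (E E' - E' E) = L L' - L' L = 0` makes `E` and `E'` commute.
-/

open Polynomial Module LinearMap

section Regular

variable {S : Type*} [Semiring S] {u u' d e e' φ ψ : S}

theorem Commute.of_isLeftRegular_mul_eq (hu : IsLeftRegular u) (hud : Commute u d)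
    (hdφ : Commute d φ) (h : u * e = φ) : Commute d e :=
  hu <| calc u * (d * e) = d * φ := by rw [← mul_assoc, hud.eq, mul_assoc, h]
    _ = φ * d := hdφ.eq
    _ = u * (e * d) := by rw [← h, mul_assoc]

theorem Commute.of_isLeftRegular_mul_mul_eq (hreg : IsLeftRegular (u * u'))
    (huu' : Commute u u') (hue' : Commute u e') (hu'e : Commute u' e)
    (h : u * e = φ) (h' : u' * e' = ψ) (hφψ : Commute φ ψ) : Commute e e' :=
  hreg <| calc u * u' * (e * e') = u * (u' * e * e') := by simp only [mul_assoc]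
    _ = φ * ψ := by rw [hu'e.eq, ← h, ← h']; simp only [mul_assoc]
    _ = ψ * φ := hφψ.eq
    _ = u' * (u * e' * e) := by rw [hue'.eq, ← h, ← h']; simp only [mul_assoc]
    _ = u * u' * (e' * e) := by rw [huu'.eq]; simp only [mul_assoc]

end Regular

namespace Module.End

variable {R M : Type*} [CommRing R] [AddCommGroup M] [Module R M]

theorem maxGenEigenspace_zero_eq_top_iff {φ : End R M} :
    φ.maxGenEigenspace 0 = ⊤ ↔ ∀ x, ∃ m : ℕ, (φ ^ m) x = 0 := by
  simp [Submodule.eq_top_iff']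

theorem maxGenEigenspace_zero_sum_eq_top {ι : Type*} (s : Finset ι) {φ : ι → End R M}
    (hcomm : ∀ i j, Commute (φ i) (φ j)) (hφ : ∀ i, (φ i).maxGenEigenspace 0 = ⊤) :
    (∑ i ∈ s, φ i).maxGenEigenspace 0 = ⊤ := by
  induction s using Finset.cons_induction with
  | empty => exact maxGenEigenspace_zero_eq_top_iff.2 fun x => ⟨1, by simp⟩
  | cons a s _ ih =>
    have := genEigenspace_inf_le_add (φ a) (∑ i ∈ s, φ i) 0 0 ⊤ ⊤
      (Commute.sum_right _ _ _ fun j _ => hcomm a j)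
    simpa [hφ a, ih] using this

end Module.End

section MulLeft

variable {R A : Type*} [CommRing R] [CommRing A] [Algebra R A]

theorem LinearMap.commute_mulLeft (a b : A) : Commute (mulLeft R a) (mulLeft R b) :=
  LinearMap.ext fun x => mul_left_comm a b x

theorem IsLeftRegular.mulLeft {c : A} (hc : IsLeftRegular c) :
    IsLeftRegular (mulLeft R c) :=
  fun _ _ h => LinearMap.ext fun x => hc (LinearMap.congr_fun h x)

namespace Module.End

theorem maxGenEigenspace_zero_mulLeft_mul_eq_top {c : A} {φ : End R A}
    (hc : Commute (mulLeft R c) φ) (hφ : φ.maxGenEigenspace 0 = ⊤) :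
    End.maxGenEigenspace (mulLeft R c * φ) 0 = ⊤ := by
  rw [maxGenEigenspace_zero_eq_top_iff] at hφ ⊢
  intro x
  obtain ⟨m, hm⟩ := hφ x
  exact ⟨m, by rw [hc.mul_pow, pow_mulLeft, mul_apply, hm, map_zero]⟩

theorem maxGenEigenspace_zero_eq_top_of_mulLeft_mul_eq {c : A} {φ e : End R A}
    (hc : IsLeftRegular c) (hcφ : Commute (mulLeft R c) φ) (h : mulLeft R c * e = φ)
    (hφ : φ.maxGenEigenspace 0 = ⊤) : e.maxGenEigenspace 0 = ⊤ := by
  have hce : Commute (mulLeft R c) e := .of_isLeftRegular_mul_eq hc.mulLeft (.refl _) hcφ h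
  rw [maxGenEigenspace_zero_eq_top_iff] at hφ ⊢
  intro x
  obtain ⟨m, hm⟩ := hφ x
  refine ⟨m, hc.pow m ?_⟩
  rwa [← h, hce.mul_pow, pow_mulLeft, mul_apply, mulLeft_apply, ← mul_zero (c ^ m)] at hm

end Module.End

end MulLeft

theorem transcendental_of_notMem_range {k A : Type*} [Field k] [CommRing A] [IsDomain A]
    [Algebra k A] (hunits : ∀ a : A, IsUnit a → a ∈ (algebraMap k A).range) {f : A}
    (hf : f ∉ (algebraMap k A).range) : Transcendental k f := fun halg =>
  hf <| hunits f <| halg.isIntegral.isUnit fun h0 => hf ⟨0, by simp [h0]⟩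

namespace Derivation

variable {R A : Type*} [CommRing R] [CommRing A] [Algebra R A]

theorem isLocallyNilpotent_iff (D : Derivation R A A) :
    D.IsLocallyNilpotent ↔ End.maxGenEigenspace (D : End R A) 0 = ⊤ := by
  simp only [IsLocallyNilpotent, End.maxGenEigenspace_zero_eq_top_iff, End.pow_apply, coeFn_coe]
  refine ⟨fun h a => (h a).imp fun _ => And.right, fun h a => ?_⟩
  obtain ⟨m, hm⟩ := h a
  exact ⟨m + 1, by omega, by rw [Function.iterate_succ_apply', hm, map_zero]⟩

theorem commute_mulLeft_of_map_eq_zero (D : Derivation R A A) {c : A} (hc : D c = 0) :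
    Commute (mulLeft R c) (D : End R A) :=
  LinearMap.ext fun x => by simp [leibniz, hc]

theorem commute_mulLeft_mul_mulLeft_mul {D D' : Derivation R A A} {c c' : A}
    (hDD' : Commute (D : End R A) D') (hc : D' c = 0) (hc' : D c' = 0) :
    Commute (mulLeft R c * (D : End R A)) (mulLeft R c' * (D' : End R A)) :=
  .mul_left ((commute_mulLeft c c').mul_right (D'.commute_mulLeft_of_map_eq_zero hc))
    ((D.commute_mulLeft_of_map_eq_zero hc').symm.mul_right hDD')

variable {ι : Type*} (s : Finset ι) {D : ι → Derivation R A A}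

theorem commute_mulLeft_sum_mulLeft_mul {d : A} (hd : ∀ i, D i d = 0) (c : ι → A) :
    Commute (mulLeft R d) (∑ i ∈ s, mulLeft R (c i) * (D i : End R A)) :=
  .sum_right _ _ _ fun i _ =>
    (commute_mulLeft d (c i)).mul_right ((D i).commute_mulLeft_of_map_eq_zero (hd i))

theorem commute_sum_mulLeft_mul (hcomm : ∀ i j, Commute (D i : End R A) (D j)) {c c' : ι → A}
    (hc : ∀ i j, D i (c j) = 0) (hc' : ∀ i j, D i (c' j) = 0) :
    Commute (∑ i ∈ s, mulLeft R (c i) * (D i : End R A))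
      (∑ i ∈ s, mulLeft R (c' i) * (D i : End R A)) :=
  .sum_left _ _ _ fun i _ => .sum_right _ _ _ fun j _ =>
    commute_mulLeft_mul_mulLeft_mul (hcomm i j) (hc j i) (hc' i j)

theorem maxGenEigenspace_zero_sum_mulLeft_mul_eq_top
    (hcomm : ∀ i j, Commute (D i : End R A) (D j)) (hD : ∀ i, (D i).IsLocallyNilpotent)
    {c : ι → A} (hc : ∀ i j, D i (c j) = 0) :
    End.maxGenEigenspace (∑ i ∈ s, mulLeft R (c i) * (D i : End R A)) 0 = ⊤ :=
  End.maxGenEigenspace_zero_sum_eq_top s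
    (fun i j => commute_mulLeft_mul_mulLeft_mul (hcomm i j) (hc j i) (hc i j)) fun i =>
      End.maxGenEigenspace_zero_mulLeft_mul_eq_top
        ((D i).commute_mulLeft_of_map_eq_zero (hc i i)) ((isLocallyNilpotent_iff _).1 (hD i))

end Derivation

theorem statement11_general (k : Type*) [Field k] (n : ℕ)
    (A : Type*) [CommRing A] [IsDomain A] [Algebra k A]
    (hunits : ∀ a : A, IsUnit a → ∃ c : k, algebraMap k A c = a)
    (D : Fin n → Derivation k A A)
    (hLN : ∀ i, (D i).IsLocallyNilpotent)
    (hcomm : ∀ i j, ∀ x : A, D i (D j x) = D j (D i x))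
    (f : A) (hf : f ∉ (algebraMap k A).range)
    (hker : {a : A | ∀ i, D i a = 0} = (Algebra.adjoin k {f} : Subalgebra k A))
    (E E' : Derivation k A A)
    (q q' : Polynomial k) (hq : q ≠ 0) (hq' : q' ≠ 0)
    (g g' : Fin n → Polynomial k)
    (hE : ∀ x : A, Polynomial.aeval f q * E x = ∑ i, Polynomial.aeval f (g i) * D i x)
    (hE' : ∀ x : A, Polynomial.aeval f q' * E' x = ∑ i, Polynomial.aeval f (g' i) * D i x) :
    E.IsLocallyNilpotent ∧ ∀ x : A, E (E' x) = E' (E x) := by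
  have hconst (i : Fin n) (p : k[X]) : D i (aeval f p) = 0 :=
    (hker ▸ aeval_mem_adjoin_singleton k f : aeval f p ∈ {a : A | ∀ i, D i a = 0}) i
  have hreg (p : k[X]) (hp : p ≠ 0) : IsLeftRegular (aeval f p) :=
    IsLeftCancelMulZero.mul_left_cancel_of_ne_zero fun h0 =>
      hp (transcendental_iff.1 (transcendental_of_notMem_range hunits hf) p h0)
  have hDcomm (i j : Fin n) : Commute (D i : End k A) (D j) := LinearMap.ext (hcomm i j)
  set L := ∑ i, mulLeft k (aeval f (g i)) * (D i : End k A)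
  set L' := ∑ i, mulLeft k (aeval f (g' i)) * (D i : End k A)
  have hEL : mulLeft k (aeval f q) * E = L := by
    ext x; simpa [L, LinearMap.sum_apply] using hE x
  have hEL' : mulLeft k (aeval f q') * E' = L' := by
    ext x; simpa [L', LinearMap.sum_apply] using hE' x
  have hcL (p : k[X]) : Commute (mulLeft k (aeval f p)) L :=
    Derivation.commute_mulLeft_sum_mulLeft_mul _ (hconst · p) _
  have hcL' (p : k[X]) : Commute (mulLeft k (aeval f p)) L' :=
    Derivation.commute_mulLeft_sum_mulLeft_mul _ (hconst · p) _
  have hLL' : Commute L L' :=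
    Derivation.commute_sum_mulLeft_mul _ hDcomm (fun i _ => hconst i _) fun i _ => hconst i _
  have hEE' : Commute (E : End k A) E' :=
    .of_isLeftRegular_mul_mul_eq ((hreg q hq).mulLeft.mul (hreg q' hq').mulLeft)
      (commute_mulLeft _ _)
      (.of_isLeftRegular_mul_eq (hreg q' hq').mulLeft (commute_mulLeft _ _) (hcL' q) hEL')
      (.of_isLeftRegular_mul_eq (hreg q hq).mulLeft (commute_mulLeft _ _) (hcL q') hEL)
      hEL hEL' hLL'
  refine ⟨E.isLocallyNilpotent_iff.2 ?_, fun x => LinearMap.congr_fun hEE'.eq x⟩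
  exact End.maxGenEigenspace_zero_eq_top_of_mulLeft_mul_eq (hreg q hq) (hcL q) hEL <|
    Derivation.maxGenEigenspace_zero_sum_mulLeft_mul_eq_top _ hDcomm hLN fun i _ => hconst i _

theorem statement11 (k : Type*) [Field k] [CharZero k] (n : ℕ) (hn : 1 ≤ n)
    (A : Type*) [CommRing A] [IsDomain A] [UniqueFactorizationMonoid A] [Algebra k A]
    (htrdeg : ∃ b : Fin (n + 1) → FractionRing A, IsTranscendenceBasis k b)
    (hunits : ∀ a : A, IsUnit a → ∃ c : k, algebraMap k A c = a)
    (D : Fin n → Derivation k A A)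
    (hLN : ∀ i, (D i).IsLocallyNilpotent)
    (hcomm : ∀ i j, ∀ x : A, D i (D j x) = D j (D i x))
    (hindep : ∀ a : Fin n → A,
      (∀ x : A, ∑ i, a i * D i x = 0) → ∀ i, a i = 0)
    (f : A) (hf : f ∉ (algebraMap k A).range)
    (hker : {a : A | ∀ i, D i a = 0} = (Algebra.adjoin k {f} : Subalgebra k A))
    (E E' : Derivation k A A)
    (q q' : Polynomial k) (hq : q ≠ 0) (hq' : q' ≠ 0)
    (g g' : Fin n → Polynomial k)
    (hE : ∀ x : A, Polynomial.aeval f q * E x = ∑ i, Polynomial.aeval f (g i) * D i x)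
    (hE' : ∀ x : A, Polynomial.aeval f q' * E' x = ∑ i, Polynomial.aeval f (g' i) * D i x) :
    E.IsLocallyNilpotent ∧ ∀ x : A, E (E' x) = E' (E x) :=
  statement11_general k n A hunits D hLN hcomm f hf hker E E' q q' hq hq' g g' hE hE'
end

section
/- Let B := ℂ[X, Y, Z]/(X²Y − Z²), with x, y, z the images of X, Y, Z. The ℂ-derivation 2Z ∂/∂Y + X² ∂/∂Z of ℂ[X, Y, Z] kills X²Y − Z² and hence induces a locally nilpotent ℂ-derivation D on B. For every α ∈ ℂ there exists w ∈ B with D(w) ∉ (x − α) (i.e., D is nonzero modulo every ideal (x − α)); nevertheless, B/(x) is not an integral domain. -/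
namespace Derivation

section CommSemiring

variable {R A : Type*} [CommSemiring R] [CommSemiring A] [Algebra R A] (D : Derivation R A A)

theorem pow_apply_mul_eq_zero {m n : ℕ} {a b : A} (ha : ((D : Module.End R A) ^ m) a = 0)
    (hb : ((D : Module.End R A) ^ n) b = 0) : ((D : Module.End R A) ^ (m + n)) (a * b) = 0 := by
  -- Each summand of `D (a * b) = a • D b + b • D a` lowers `m` or `n` by one.
  induction m generalizing a b n with
  | zero => simp_all
  | succ m ihm =>
    induction n generalizing b with
    | zero => simp_all
    | succ n ihn =>
      have hDa : ((D : Module.End R A) ^ m) (D a) = 0 := by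
        rwa [pow_succ, Module.End.mul_apply] at ha
      have hDb : ((D : Module.End R A) ^ n) (D b) = 0 := by
        rwa [pow_succ, Module.End.mul_apply] at hb
      rw [show m + 1 + (n + 1) = m + 1 + n + 1 by omega, pow_succ, Module.End.mul_apply]
      simp only [coeFn_coe, leibniz, smul_eq_mul, map_add]
      rw [ihn hDb, mul_comm b, show m + 1 + n = m + (n + 1) by omega, ihm hDa hb, add_zero]

def locallyNilpotentSubalgebra : Subalgebra R A where
  carrier := {a | ∃ n, ((D : Module.End R A) ^ n) a = 0}
  mul_mem' := fun ⟨m, ha⟩ ⟨n, hb⟩ => ⟨m + n, D.pow_apply_mul_eq_zero ha hb⟩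
  add_mem' := fun ⟨m, ha⟩ ⟨n, hb⟩ =>
    ⟨m + n, by rw [map_add, Module.End.pow_map_zero_of_le (by omega) ha,
      Module.End.pow_map_zero_of_le (by omega) hb, add_zero]⟩
  algebraMap_mem' r := ⟨1, by simp⟩

@[simp]
theorem map_ofNat (n : ℕ) [n.AtLeastTwo] : D (no_index (OfNat.ofNat n : A)) = 0 :=
  D.map_natCast n

theorem map_mem_span_singleton {g a : A} (hg : D g ∈ Ideal.span {g})
    (ha : a ∈ Ideal.span {g}) : D a ∈ Ideal.span {g} := by
  obtain ⟨c, rfl⟩ := Ideal.mem_span_singleton'.mp ha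
  rw [leibniz, smul_eq_mul, smul_eq_mul]
  exact add_mem (Ideal.mul_mem_left _ _ hg)
    (Ideal.mul_mem_right _ _ (Ideal.mem_span_singleton_self g))

end CommSemiring

variable {R A : Type*} [CommRing R] [CommRing A] [Algebra R A] (D : Derivation R A A)

theorem isLocallyNilpotent_of_adjoin_eq_top {s : Set A} (hs : Algebra.adjoin R s = ⊤)
    (h : ∀ a ∈ s, ∃ n, ((D : Module.End R A) ^ n) a = 0) : D.IsLocallyNilpotent := by
  intro a
  have ha : a ∈ D.locallyNilpotentSubalgebra :=
    Algebra.adjoin_le (S := D.locallyNilpotentSubalgebra) h (hs ▸ Algebra.mem_top)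
  obtain ⟨n, hn⟩ := ha
  exact ⟨n + 1, by omega,
    (Module.End.pow_apply _ _ _).symm.trans (Module.End.pow_map_zero_of_le (by omega) hn)⟩

variable (I : Ideal A) (hI : ∀ a ∈ I, D a ∈ I)

def liftQuotient : Derivation R (A ⧸ I) (A ⧸ I) where
  toLinearMap :=
    (I.restrictScalars R).liftQ ((Ideal.Quotient.mkₐ R I).toLinearMap ∘ₗ D.toLinearMap)
        (fun a ha => (Ideal.Quotient.eq_zero_iff_mem).mpr (hI a ha)) ∘ₗ
      (Submodule.Quotient.restrictScalarsEquiv R I).symm.toLinearMap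
  map_one_eq_zero' := by
    change Ideal.Quotient.mk I (D 1) = 0
    rw [map_one_eq_zero, map_zero]
  leibniz' := by
    rintro ⟨a⟩ ⟨b⟩
    change Ideal.Quotient.mk I (D (a * b)) =
      Ideal.Quotient.mk I a • Ideal.Quotient.mk I (D b) +
        Ideal.Quotient.mk I b • Ideal.Quotient.mk I (D a)
    simp only [leibniz, smul_eq_mul, map_add, map_mul]

theorem liftQuotient_mk (a : A) :
    D.liftQuotient I hI (Ideal.Quotient.mk I a) = Ideal.Quotient.mk I (D a) :=
  rfl

variable {D} in
theorem IsLocallyNilpotent.liftQuotient (hD : D.IsLocallyNilpotent) :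
    (D.liftQuotient I hI).IsLocallyNilpotent := by
  intro a
  obtain ⟨b, rfl⟩ := Ideal.Quotient.mk_surjective a
  obtain ⟨m, hm, hDb⟩ := hD b
  have hsemiconj : Function.Semiconj (Ideal.Quotient.mk I) D (D.liftQuotient I hI) :=
    fun b => (D.liftQuotient_mk I hI b).symm
  exact ⟨m, hm, by rw [← (hsemiconj.iterate_right m).eq b]; simp [hDb]⟩

end Derivation

theorem Ideal.notMem_span_singleton_of_map_eq_zero {A S F : Type*} [CommSemiring A] [Semiring S]
    [FunLike F A S] [RingHomClass F A S] (φ : F) {a w : A} (ha : φ a = 0) (hw : φ w ≠ 0) :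
    w ∉ Ideal.span {a} := by
  intro h
  obtain ⟨c, rfl⟩ := Ideal.mem_span_singleton'.mp h
  exact hw (by rw [map_mul, ha, mul_zero])

theorem Ideal.Quotient.not_isDomain_of_sq_mem {A : Type*} [CommRing A] {I : Ideal A} {w : A}
    (hw : w ∉ I) (hw2 : w ^ 2 ∈ I) : ¬IsDomain (A ⧸ I) :=
  fun h => hw (((Ideal.Quotient.isDomain_iff_prime I).mp h).mem_of_pow_mem 2 hw2)

namespace MvPolynomial

section aevalQuotient

variable {σ R S : Type*} [CommRing R] [CommRing S] [Algebra R S]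

noncomputable def aevalQuotientSpanSingleton (G : MvPolynomial σ R) (f : σ → S)
    (hf : aeval f G = 0) : MvPolynomial σ R ⧸ Ideal.span {G} →ₐ[R] S :=
  Ideal.Quotient.liftₐ _ (aeval f) fun a ha => by
    obtain ⟨c, rfl⟩ := Ideal.mem_span_singleton'.mp ha
    rw [map_mul, hf, mul_zero]

@[simp]
theorem aevalQuotientSpanSingleton_mk (G : MvPolynomial σ R) (f : σ → S) (hf : aeval f G = 0)
    (p : MvPolynomial σ R) :
    aevalQuotientSpanSingleton G f hf (Ideal.Quotient.mk _ p) = aeval f p :=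
  rfl

end aevalQuotient

theorem mk_X_two_notMem_span_mk_X_zero_sub {G : MvPolynomial (Fin 3) ℂ}
    (hG : G = X 0 ^ 2 * X 1 - X 2 ^ 2) (α : ℂ) :
    Ideal.Quotient.mk (Ideal.span {G}) (X 2) ∉
      Ideal.span {Ideal.Quotient.mk _ (X 0) - algebraMap ℂ (MvPolynomial (Fin 3) ℂ ⧸ _) α} := by
  rcases eq_or_ne α 0 with rfl | hα
  · have hε : aeval ![0, 0, DualNumber.eps] G = (0 : DualNumber ℂ) := by
      simp [hG, sq, DualNumber.eps_mul_eps]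
    refine Ideal.notMem_span_singleton_of_map_eq_zero (aevalQuotientSpanSingleton G _ hε)
      (by simp) fun h => ?_
    simpa using congrArg TrivSqZeroExt.snd h
  · have hα' : aeval ![α, 1, α] G = 0 := by simp [hG]
    exact Ideal.notMem_span_singleton_of_map_eq_zero (aevalQuotientSpanSingleton G _ hα')
      (by simp) (by simpa using hα)

theorem not_isDomain_quotient_span_mk_X_zero {G : MvPolynomial (Fin 3) ℂ}
    (hG : G = X 0 ^ 2 * X 1 - X 2 ^ 2) :
    ¬IsDomain ((MvPolynomial (Fin 3) ℂ ⧸ Ideal.span {G}) ⧸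
      Ideal.span {Ideal.Quotient.mk (Ideal.span {G}) (X 0)}) := by
  refine Ideal.Quotient.not_isDomain_of_sq_mem
    (by simpa using mk_X_two_notMem_span_mk_X_zero_sub hG 0) ?_
  have hz2 : Ideal.Quotient.mk (Ideal.span {G}) (X 2) ^ 2 =
      Ideal.Quotient.mk _ (X 0) * Ideal.Quotient.mk _ (X 0 * X 1) := by
    rw [← map_pow, ← map_mul]
    exact Ideal.Quotient.eq.mpr (Ideal.mem_span_singleton.mpr ⟨-1, by rw [hG]; ring⟩)
  rw [hz2]
  exact Ideal.mul_mem_right _ _ (Ideal.mem_span_singleton_self _)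

end MvPolynomial

open MvPolynomial in
theorem statement17
    (G : MvPolynomial (Fin 3) ℂ)
    (hG : G = (X 0) ^ 2 * X 1 - (X 2) ^ 2)
    (Dt : Derivation ℂ (MvPolynomial (Fin 3) ℂ) (MvPolynomial (Fin 3) ℂ))
    (hDt : Dt = ((2 : MvPolynomial (Fin 3) ℂ) * X 2) • pderiv (1 : Fin 3) +
      ((X 0 : MvPolynomial (Fin 3) ℂ) ^ 2) • pderiv (2 : Fin 3))
    (x : MvPolynomial (Fin 3) ℂ ⧸ Ideal.span {G})
    (hx : x = Ideal.Quotient.mk (Ideal.span {G}) (X 0)) :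
    Dt G = 0 ∧
    ∃ D : Derivation ℂ (MvPolynomial (Fin 3) ℂ ⧸ Ideal.span {G})
        (MvPolynomial (Fin 3) ℂ ⧸ Ideal.span {G}),
      (∀ r : MvPolynomial (Fin 3) ℂ,
        D (Ideal.Quotient.mk (Ideal.span {G}) r) = Ideal.Quotient.mk (Ideal.span {G}) (Dt r)) ∧
      D.IsLocallyNilpotent ∧
      (∀ α : ℂ, ∃ w, D w ∉
        Ideal.span {x - algebraMap ℂ (MvPolynomial (Fin 3) ℂ ⧸ Ideal.span {G}) α}) ∧
      ¬ IsDomain ((MvPolynomial (Fin 3) ℂ ⧸ Ideal.span {G}) ⧸ Ideal.span {x}) := by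
  subst hx
  have hDtG : Dt G = 0 := by
    subst hG hDt
    simp [pderiv_X]
    ring
  have hDtX : ∀ j : Fin 3, ((Dt : Module.End ℂ (MvPolynomial (Fin 3) ℂ)) ^ 3) (X j) = 0 := by
    subst hDt
    intro j
    fin_cases j <;> simp [pow_succ, pderiv_X]
  have hDtI : ∀ r ∈ Ideal.span {G}, Dt r ∈ Ideal.span {G} :=
    fun r => Dt.map_mem_span_singleton (hDtG ▸ zero_mem _)
  have hDtnil : Dt.IsLocallyNilpotent :=
    Dt.isLocallyNilpotent_of_adjoin_eq_top adjoin_range_X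
      (Set.forall_mem_range.2 fun j => ⟨3, hDtX j⟩)
  refine ⟨hDtG, Dt.liftQuotient _ hDtI, fun r => rfl, hDtnil.liftQuotient _ hDtI,
    fun α => ⟨Ideal.Quotient.mk _ (X 1), ?_⟩, not_isDomain_quotient_span_mk_X_zero hG⟩
  have hDy : Dt.liftQuotient _ hDtI (Ideal.Quotient.mk _ (X 1)) =
      2 * Ideal.Quotient.mk _ (X 2) := by
    simp [Derivation.liftQuotient_mk, hDt, pderiv_X, map_ofNat]
  have h2 : IsUnit (2 : MvPolynomial (Fin 3) ℂ ⧸ Ideal.span {G}) := by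
    rw [← map_ofNat (algebraMap ℂ (MvPolynomial (Fin 3) ℂ ⧸ Ideal.span {G})) 2]
    exact (IsUnit.mk0 (2 : ℂ) two_ne_zero).map _
  rw [hDy, Ideal.unit_mul_mem_iff_mem _ h2]
  exact mk_X_two_notMem_span_mk_X_zero_sub hG α
end
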